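/- (Theorem 1, variance) For every x ∈ ℝ^n, the variance of the acceptance ratio under the proposal distribution satisfies v_η² := ∫_{ℝ^n} η(z, x)² g(z) dz − (∫_{ℝ^n} η(z, x) g(z) dz)² = (1/N₂ − 1/N₁²)/w(x)². -/

import Mathlib

/-! Put `T = P L`, where `P` is the orthogonal matrix with rows `v j`. In the coordinates
`y = T z` both precision matrices are diagonal: `Γ_cond⁻¹ = Tᵀ diag(σ + μλ) T` and
`Γ̂⁻¹ = Tᵀ diag(d) T` with `d j = σ + μλ_j` for `j < k` and `d j = σ` otherwise. So after the
change of variables `y = T z` the integrand `w^ℓ g` factorises into one-dimensional Gaussian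
integrals, and completing the square in each of them gives `∫ w^ℓ g = 1/N_ℓ`: a retained mode
`j < k` contributes `1`, a discarded one `exp(-(μ²/2σ) (ℓμλ_j/(ℓμλ_j+σ)) β_j²) / √(1 + ℓμλ_j/σ)`
with `β_j = bᵀ A L⁻¹ v_j`. As `η(z, x) = w(z)/w(x)`, the variance is `(1/N₂ - 1/N₁²)/w(x)²`. -/

open Matrix MeasureTheory Finset

noncomputable section

/-- The mean of `exp (-a y² / 2)` for `y ∼ 𝓝(s, d⁻¹)`. -/
def gaussianExpSqMean (a d s : ℝ) : ℝ :=
  Real.exp (-(1/2) * (a * d * s ^ 2 / (a + d))) / √(1 + a / d)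

theorem gaussianExpSqMean_zero_left (d s : ℝ) : gaussianExpSqMean 0 d s = 1 := by
  simp [gaussianExpSqMean]

theorem integral_exp_neg_half_sq_add_sq (a d s : ℝ) (had : 0 < a + d) :
    ∫ y : ℝ, Real.exp (-(1/2) * (a * y ^ 2 + d * (y - s) ^ 2)) =
      √(2 * Real.pi / (a + d)) * Real.exp (-(1/2) * (a * d * s ^ 2 / (a + d))) := by
  have hsq : ∀ y : ℝ, -(1/2) * (a * y ^ 2 + d * (y - s) ^ 2) =
      -((a + d) / 2) * (y - d * s / (a + d)) ^ 2 + -(1/2) * (a * d * s ^ 2 / (a + d)) := by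
    intro y; field_simp; ring
  simp_rw [hsq, Real.exp_add]
  rw [integral_mul_const, integral_sub_right_eq_self (fun y => Real.exp (-((a + d) / 2) * y ^ 2)),
    integral_gaussian, div_div_eq_mul_div]
  ring_nf

theorem sqrt_mul_integral_exp_neg_half_sq_add_sq (a d s : ℝ) (hd : 0 < d) (had : 0 < a + d) :
    √(d / (2 * Real.pi)) * ∫ y : ℝ, Real.exp (-(1/2) * (a * y ^ 2 + d * (y - s) ^ 2)) =
      gaussianExpSqMean a d s := by
  have hratio : √(d / (2 * Real.pi)) * √(2 * Real.pi / (a + d)) = (√(1 + a / d))⁻¹ := by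
    rw [← Real.sqrt_mul (by positivity), ← Real.sqrt_inv]
    congr 1
    field_simp
    rw [add_comm d, div_self had.ne']
  rw [integral_exp_neg_half_sq_add_sq a d s had, ← mul_assoc, hratio, inv_mul_eq_div]
  rfl

theorem prod_gaussianExpSqMean_eq {ι : Type*} [Fintype ι] (s : Finset ι) {σ : ℝ} (hσ : 0 < σ)
    (μ t : ℝ) {lam β d e m : ι → ℝ} (he_out : ∀ j ∉ s, e j = 0) (he : ∀ j ∈ s, e j = μ * lam j)
    (hd : ∀ j ∈ s, d j = σ) (hm : ∀ j ∈ s, m j = μ * (σ⁻¹ * β j)) :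
    ∏ j, gaussianExpSqMean (t * e j) (d j) (m j) =
      (Real.exp ((μ ^ 2 / (2 * σ)) * ∑ j ∈ s, (t * μ * lam j / (t * μ * lam j + σ)) * β j ^ 2) *
        ∏ j ∈ s, √(1 + t * μ * lam j / σ))⁻¹ := by
  rw [← prod_subset (subset_univ s) fun j _ hj => by
      rw [he_out j hj, mul_zero, gaussianExpSqMean_zero_left],
    mul_inv, ← Real.exp_neg, ← neg_mul, mul_sum, Real.exp_sum, ← prod_inv_distrib,
    ← prod_mul_distrib]
  refine prod_congr rfl fun j hj => ?_
  rw [gaussianExpSqMean, he j hj, hd j hj, hm j hj, ← mul_assoc t μ, div_eq_mul_inv]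
  congr 2
  field_simp

section Algebra
variable {ι R : Type*} [Fintype ι] [DecidableEq ι] [CommRing R]

theorem of_mul_transpose_of_eq_one {v : ι → ι → R}
    (hv : ∀ i j, v i ⬝ᵥ v j = if i = j then 1 else 0) : of v * (of v)ᵀ = 1 := by
  ext i j
  simpa [mul_apply, one_apply, dotProduct] using hv i j

theorem sum_smul_vecMulVec_eq {κ : Type*} (v : ι → κ → R) (c : ι → R) :
    ∑ j, c j • vecMulVec (v j) (v j) = (of v)ᵀ * diagonal c * of v := by
  ext i i'
  simp [mul_apply, Matrix.sum_apply, vecMulVec_apply, diagonal_apply, mul_comm, mul_left_comm]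

theorem smul_one_add_smul_conj_diagonal {P : Matrix ι ι R} (hP : Pᵀ * P = 1) (a b : R)
    (c : ι → R) :
    a • (1 : Matrix ι ι R) + b • (Pᵀ * diagonal c * P) =
      Pᵀ * diagonal (fun j => a + b * c j) * P := by
  have hdiag : diagonal (fun j => a + b * c j) = a • 1 + b • diagonal c := by
    ext i j; by_cases h : i = j <;> simp [one_apply, h]
  rw [hdiag, Matrix.mul_add, Matrix.add_mul, Matrix.mul_smul, Matrix.smul_mul, Matrix.mul_one, hP,
    Matrix.mul_smul, Matrix.smul_mul]

theorem conj_smul_one_add_smul_sum_vecMulVec {v : ι → ι → R}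
    (hv : ∀ i j, v i ⬝ᵥ v j = if i = j then 1 else 0) (L : Matrix ι ι R) (a b : R) (c : ι → R) :
    Lᵀ * (a • 1 + b • ∑ j, c j • vecMulVec (v j) (v j)) * L =
      (of v * L)ᵀ * diagonal (fun j => a + b * c j) * (of v * L) := by
  rw [sum_smul_vecMulVec_eq, smul_one_add_smul_conj_diagonal
    (mul_eq_one_comm.mp (of_mul_transpose_of_eq_one hv)), transpose_mul]
  simp only [Matrix.mul_assoc]

theorem dotProduct_transpose_mul_diagonal_mul_mulVec {κ : Type*} [Fintype κ] (T : Matrix ι κ R)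
    (c : ι → R) (x : κ → R) : x ⬝ᵥ ((Tᵀ * diagonal c * T) *ᵥ x) = ∑ i, c i * (T *ᵥ x) i ^ 2 := by
  rw [← mulVec_mulVec, ← mulVec_mulVec, dotProduct_mulVec, vecMul_transpose]
  simp only [mulVec_diagonal, dotProduct]
  exact sum_congr rfl fun i _ => by ring

theorem det_transpose_mul_diagonal_mul (T : Matrix ι ι R) (c : ι → R) :
    (Tᵀ * diagonal c * T).det = T.det ^ 2 * ∏ i, c i := by
  simp only [det_mul, det_transpose, det_diagonal]; ring

theorem inv_mul_inv_mul_transpose_inv (L M : Matrix ι ι R) :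
    L⁻¹ * M⁻¹ * L⁻¹ᵀ = (Lᵀ * M * L)⁻¹ := by
  rw [transpose_nonsing_inv, Matrix.mul_inv_rev, Matrix.mul_inv_rev, Matrix.mul_assoc]

end Algebra

section Field
variable {ι K : Type*} [Fintype ι] [DecidableEq ι] [Field K] {T : Matrix ι ι K} {c : ι → K}

theorem inv_inv_transpose_mul_diagonal_mul (hT : T.det ≠ 0) (hc : ∀ i, c i ≠ 0) :
    (Tᵀ * diagonal c * T)⁻¹⁻¹ = Tᵀ * diagonal c * T :=
  nonsing_inv_nonsing_inv _ <| by
    rw [det_transpose_mul_diagonal_mul, isUnit_iff_ne_zero]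
    exact mul_ne_zero (pow_ne_zero 2 hT) (prod_ne_zero_iff.mpr fun i _ => hc i)

theorem inv_inv_transpose_mul_diagonal_mul_sub (hT : T.det ≠ 0) {d : ι → K}
    (hc : ∀ i, c i ≠ 0) (hd : ∀ i, d i ≠ 0) :
    (Tᵀ * diagonal c * T)⁻¹⁻¹ - (Tᵀ * diagonal d * T)⁻¹⁻¹ = Tᵀ * diagonal (c - d) * T := by
  rw [inv_inv_transpose_mul_diagonal_mul hT hc, inv_inv_transpose_mul_diagonal_mul hT hd,
    ← Matrix.sub_mul, ← Matrix.mul_sub, diagonal_sub]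
  rfl

theorem mulVec_mulVec_inv_transpose_mul_diagonal_mul (hT : IsUnit T.det) (hc : ∀ i, c i ≠ 0)
    (u : ι → K) :
    T *ᵥ ((Tᵀ * diagonal c * T)⁻¹ *ᵥ u) = fun i => (c i)⁻¹ * (Tᵀ⁻¹ *ᵥ u) i := by
  have hinv : (diagonal c)⁻¹ = diagonal c⁻¹ :=
    inv_eq_left_inv (by rw [diagonal_mul_diagonal, ← diagonal_one]; simp [hc])
  rw [Matrix.mul_inv_rev, Matrix.mul_inv_rev, hinv, mulVec_mulVec, ← Matrix.mul_assoc,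
    mul_nonsing_inv _ hT, Matrix.one_mul, ← mulVec_mulVec]
  ext i
  exact mulVec_diagonal _ _ i

theorem transpose_inv_mulVec_apply {m : Type*} [Fintype m] {v : ι → ι → K}
    (hv : ∀ i j, v i ⬝ᵥ v j = if i = j then 1 else 0) (L : Matrix ι ι K) (A : Matrix m ι K)
    (b : m → K) (j : ι) :
    ((of v * L)ᵀ⁻¹ *ᵥ (Aᵀ *ᵥ b)) j = b ⬝ᵥ (A *ᵥ (L⁻¹ *ᵥ v j)) := by
  have hP : (of v)⁻¹ = (of v)ᵀ := inv_eq_right_inv (of_mul_transpose_of_eq_one hv)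
  rw [← transpose_nonsing_inv, Matrix.mul_inv_rev, hP, transpose_mul, transpose_transpose,
    ← mulVec_mulVec, mulVec_transpose, mulVec_transpose]
  change v j ⬝ᵥ _ = _
  rw [dotProduct_comm, ← dotProduct_mulVec, ← dotProduct_mulVec]

end Field

section Gaussian
variable {ι : Type*} [Fintype ι] [DecidableEq ι] {T : Matrix ι ι ℝ} {d : ι → ℝ}

theorem integral_comp_mulVec {E : Type*} [NormedAddCommGroup E] [NormedSpace ℝ E]
    (hT : T.det ≠ 0) (F : (ι → ℝ) → E) :
    ∫ z, F (T *ᵥ z) = |T.det|⁻¹ • ∫ y, F y := by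
  have hemb : MeasurableEmbedding (toLin' T) :=
    (LinearMap.isClosedEmbedding_of_injective (LinearMap.ker_eq_bot.mpr
      (mulVec_injective_of_det_ne_zero hT))).measurableEmbedding
  rw [← abs_inv, ← ENNReal.toReal_ofReal (abs_nonneg _), ← integral_smul_measure,
    ← Real.map_matrix_volume_pi_eq_smul_volume_pi hT, hemb.integral_map]
  rfl

theorem integral_exp_diag_quad_mul_gaussian (hT : T.det ≠ 0) (a s : ι → ℝ)
    (hd : ∀ i, 0 < d i) (had : ∀ i, 0 < a i + d i) :
    (∏ i, √(d i / (2 * Real.pi))) * |T.det| *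
        ∫ z, Real.exp (-(1/2) * ∑ i, a i * (T *ᵥ z) i ^ 2) *
          Real.exp (-(1/2) * ∑ i, d i * ((T *ᵥ z) i - s i) ^ 2) =
      ∏ i, gaussianExpSqMean (a i) (d i) (s i) := by
  set f : ι → ℝ → ℝ := fun i t => Real.exp (-(1/2) * (a i * t ^ 2 + d i * (t - s i) ^ 2))
  have hsplit : ∀ z, Real.exp (-(1/2) * ∑ i, a i * (T *ᵥ z) i ^ 2) *
      Real.exp (-(1/2) * ∑ i, d i * ((T *ᵥ z) i - s i) ^ 2) = ∏ i, f i ((T *ᵥ z) i) := by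
    intro z
    rw [← Real.exp_add, ← Real.exp_sum, ← mul_add, ← sum_add_distrib, mul_sum]
  simp_rw [hsplit]
  rw [integral_comp_mulVec hT (fun y => ∏ i, f i (y i)), integral_fintype_prod_volume_eq_prod f,
    smul_eq_mul, mul_assoc, mul_inv_cancel_left₀ (abs_ne_zero.mpr hT), ← prod_mul_distrib]
  exact prod_congr rfl fun i _ => sqrt_mul_integral_exp_neg_half_sq_add_sq _ _ _ (hd i) (had i)

theorem two_pi_rpow_mul_det_inv_rpow (hT : T.det ≠ 0) (hd : ∀ i, 0 < d i) :
    (2 * Real.pi) ^ (-(Fintype.card ι : ℝ) / 2) * (Tᵀ * diagonal d * T)⁻¹.det ^ (-(1 : ℝ) / 2) =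
      (∏ i, √(d i / (2 * Real.pi))) * |T.det| := by
  have h2pi : 0 ≤ 2 * Real.pi := by positivity
  have hprod : 0 ≤ ∏ i, d i := (prod_pos fun i _ => hd i).le
  have hdet : (Tᵀ * diagonal d * T)⁻¹.det ^ (-(1 : ℝ) / 2) = |T.det| * ∏ i, √(d i) := by
    rw [det_nonsing_inv, det_transpose_mul_diagonal_mul, Ring.inverse_eq_inv',
      Real.inv_rpow (by positivity), neg_div, Real.rpow_neg (by positivity), inv_inv,
      ← Real.sqrt_eq_rpow, Real.sqrt_mul' _ hprod, Real.sqrt_sq_eq_abs,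
      Real.sqrt_prod _ fun i _ => (hd i).le]
  have hpi : (2 * Real.pi) ^ (-(Fintype.card ι : ℝ) / 2) =
      (√(2 * Real.pi) ^ Fintype.card ι)⁻¹ := by
    rw [neg_div, Real.rpow_neg h2pi, div_eq_mul_one_div, mul_comm (Fintype.card ι : ℝ),
      Real.rpow_mul h2pi, ← Real.sqrt_eq_rpow, Real.rpow_natCast]
  simp_rw [hdet, hpi, Real.sqrt_div' _ h2pi, prod_div_distrib, prod_const, card_univ]
  ring

theorem integral_exp_pow_mul_gaussian (hT : T.det ≠ 0) (hd : ∀ i, 0 < d i) {e : ι → ℝ}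
    (he : ∀ i, 0 ≤ e i) (m : ι → ℝ) (ℓ : ℕ) :
    ∫ z, Real.exp (-(1/2) * (z ⬝ᵥ ((Tᵀ * diagonal e * T) *ᵥ z))) ^ ℓ *
        ((2 * Real.pi) ^ (-(Fintype.card ι : ℝ) / 2) *
          (Tᵀ * diagonal d * T)⁻¹.det ^ (-(1 : ℝ) / 2) *
          Real.exp (-(1/2) * ((z - m) ⬝ᵥ ((Tᵀ * diagonal d * T) *ᵥ (z - m))))) =
      ∏ i, gaussianExpSqMean (ℓ * e i) (d i) ((T *ᵥ m) i) := by
  have had : ∀ i, 0 < ℓ * e i + d i := fun i => by have := he i; have := hd i; positivity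
  rw [← integral_exp_diag_quad_mul_gaussian hT (fun i => ℓ * e i) (T *ᵥ m) hd had,
    two_pi_rpow_mul_det_inv_rpow hT hd, ← integral_const_mul]
  congr 1; ext z
  rw [← Real.exp_nat_mul, dotProduct_transpose_mul_diagonal_mul_mulVec,
    dotProduct_transpose_mul_diagonal_mul_mulVec, mulVec_sub, mul_left_comm (ℓ : ℝ),
    mul_sum _ _ (ℓ : ℝ)]
  simp only [Pi.sub_apply, mul_assoc]
  ring

end Gaussian

section Eigenbasis
variable {ι : Type*} [Fintype ι] [DecidableEq ι] {v : ι → ι → ℝ} {L : Matrix ι ι ℝ}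

theorem inv_mul_inv_smul_one_add_smul_sum_filter_mul_transpose_inv
    (hv : ∀ i j, v i ⬝ᵥ v j = if i = j then 1 else 0) (p : ι → Prop) [DecidablePred p]
    (σ μ : ℝ) (lam : ι → ℝ) :
    L⁻¹ * (σ • 1 + μ • ∑ j ∈ univ.filter p, lam j • vecMulVec (v j) (v j))⁻¹ * L⁻¹ᵀ =
      ((of v * L)ᵀ * diagonal (fun j => σ + μ * if p j then lam j else 0) * (of v * L))⁻¹ := by
  rw [inv_mul_inv_mul_transpose_inv, ← conj_smul_one_add_smul_sum_vecMulVec hv, sum_filter]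
  simp_rw [ite_smul, zero_smul]

theorem smul_transpose_mul_self_add_smul_eq (hv : ∀ i j, v i ⬝ᵥ v j = if i = j then 1 else 0)
    {m : Type*} [Fintype m] {A : Matrix m ι ℝ} (hL : IsUnit L.det) {lam : ι → ℝ}
    (hH : L⁻¹ᵀ * Aᵀ * A * L⁻¹ = ∑ j, lam j • vecMulVec (v j) (v j)) (σ μ : ℝ) :
    μ • (Aᵀ * A) + σ • (Lᵀ * L) =
      (of v * L)ᵀ * diagonal (fun j => σ + μ * lam j) * (of v * L) := by
  rw [← conj_smul_one_add_smul_sum_vecMulVec hv, ← hH]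
  have hLt : Lᵀ * L⁻¹ᵀ = 1 := by rw [← transpose_mul, nonsing_inv_mul _ hL, transpose_one]
  simp only [Matrix.mul_add, Matrix.add_mul, Matrix.mul_smul, Matrix.smul_mul, Matrix.mul_one,
    Matrix.mul_assoc, nonsing_inv_mul _ hL]
  rw [← Matrix.mul_assoc Lᵀ, hLt, Matrix.one_mul, add_comm]

end Eigenbasis
theorem stmt11_general
    (m n : ℕ)
    (A : Matrix (Fin m) (Fin n) ℝ) (L : Matrix (Fin n) (Fin n) ℝ) (hL : IsUnit L.det)
    (μ σ : ℝ) (hμ : 0 < μ) (hσ : 0 < σ)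
    (b : Fin m → ℝ)
    (v : Fin n → Fin n → ℝ) (lam : Fin n → ℝ)
    (horth : ∀ i j, v i ⬝ᵥ v j = if i = j then (1 : ℝ) else 0)
    (hlam_nonneg : ∀ j, 0 ≤ lam j)
    (hHdecomp : (L⁻¹)ᵀ * Aᵀ * A * L⁻¹ = ∑ j, lam j • vecMulVec (v j) (v j))
    (k : ℕ)
    (Γcond : Matrix (Fin n) (Fin n) ℝ)
    (hΓcond : Γcond = (μ • (Aᵀ * A) + σ • (Lᵀ * L))⁻¹)
    (Γhat : Matrix (Fin n) (Fin n) ℝ)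
    (hΓhat : Γhat = L⁻¹ * (σ • (1 : Matrix (Fin n) (Fin n) ℝ) +
        μ • ∑ j ∈ Finset.univ.filter (fun j : Fin n => (j : ℕ) < k),
          lam j • vecMulVec (v j) (v j))⁻¹ * (L⁻¹)ᵀ)
    (xhat : Fin n → ℝ) (hxhat : xhat = μ • (Γhat *ᵥ (Aᵀ *ᵥ b)))
    (w : (Fin n → ℝ) → ℝ)
    (hw : ∀ x, w x = Real.exp (-(1/2) * (x ⬝ᵥ ((Γcond⁻¹ - Γhat⁻¹) *ᵥ x))))
    (η : (Fin n → ℝ) → (Fin n → ℝ) → ℝ)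
    (hη : ∀ z x, η z x = w z / w x)
    (gfun : (Fin n → ℝ) → ℝ)
    (hgfun : ∀ x, gfun x = (2 * Real.pi) ^ (-(n : ℝ) / 2) * Γhat.det ^ (-(1 : ℝ) / 2) *
        Real.exp (-(1/2) * ((x - xhat) ⬝ᵥ (Γhat⁻¹ *ᵥ (x - xhat)))))
    (N : ℕ → ℝ)
    (hN : ∀ ℓ : ℕ, N ℓ = Real.exp ((μ ^ 2 / (2 * σ)) *
        ∑ j ∈ Finset.univ.filter (fun j : Fin n => k ≤ (j : ℕ)),
          (((ℓ : ℝ) * μ * lam j) / ((ℓ : ℝ) * μ * lam j + σ)) *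
            (b ⬝ᵥ (A *ᵥ (L⁻¹ *ᵥ v j))) ^ 2) *
      ∏ j ∈ Finset.univ.filter (fun j : Fin n => k ≤ (j : ℕ)),
        Real.sqrt (1 + (ℓ : ℝ) * μ * lam j / σ))
    :
    ∀ x : Fin n → ℝ,
      (∫ z : Fin n → ℝ, η z x ^ 2 * gfun z) - (∫ z : Fin n → ℝ, η z x * gfun z) ^ 2 =
        (1 / N 2 - 1 / N 1 ^ 2) / w x ^ 2 := by
  intro x
  set T := of v * L
  set d : Fin n → ℝ := fun j => σ + μ * if (j : ℕ) < k then lam j else 0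
  set e : Fin n → ℝ := (fun j => σ + μ * lam j) - d
  have hT : T.det ≠ 0 := by
    rw [det_mul]
    exact mul_ne_zero (det_ne_zero_of_right_inverse (of_mul_transpose_of_eq_one horth)) hL.ne_zero
  have hd : ∀ j, 0 < d j := fun j => by have := hlam_nonneg j; positivity
  have he : ∀ j, 0 ≤ e j := fun j => by
    simp only [e, d, Pi.sub_apply]; split_ifs <;> simp [mul_nonneg hμ.le (hlam_nonneg j)]
  have hΓhat' : Γhat = (Tᵀ * diagonal d * T)⁻¹ := by
    rw [hΓhat, inv_mul_inv_smul_one_add_smul_sum_filter_mul_transpose_inv horth]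
  have hprec : Γcond⁻¹ - Γhat⁻¹ = Tᵀ * diagonal e * T := by
    rw [hΓcond, smul_transpose_mul_self_add_smul_eq horth hL hHdecomp, hΓhat',
      inv_inv_transpose_mul_diagonal_mul_sub hT (fun j => by have := hlam_nonneg j; positivity)
        fun j => (hd j).ne']
  have hmean : T *ᵥ xhat = μ • fun j => (d j)⁻¹ * (b ⬝ᵥ (A *ᵥ (L⁻¹ *ᵥ v j))) := by
    rw [hxhat, mulVec_smul, hΓhat',
      mulVec_mulVec_inv_transpose_mul_diagonal_mul hT.isUnit fun j => (hd j).ne']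
    simp only [T, transpose_inv_mulVec_apply horth]
  have hmoment : ∀ ℓ : ℕ, ∫ z, w z ^ ℓ * gfun z = (N ℓ)⁻¹ := fun ℓ => by
    have h := integral_exp_pow_mul_gaussian hT hd he xhat ℓ
    rw [Fintype.card_fin] at h
    simp_rw [hw, hgfun, hprec, hΓhat', inv_inv_transpose_mul_diagonal_mul hT fun j => (hd j).ne']
    rw [h, hN]
    refine prod_gaussianExpSqMean_eq _ hσ μ ℓ ?_ ?_ ?_ ?_ <;> intro j hj <;> simp_all [d, e]
  have hη_moment : ∀ ℓ : ℕ, ∫ z, η z x ^ ℓ * gfun z = (N ℓ)⁻¹ / w x ^ ℓ := fun ℓ => by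
    simp_rw [hη, div_pow, div_mul_eq_mul_div, integral_div, hmoment]
  have hfirst := hη_moment 1
  simp only [pow_one] at hfirst
  rw [hfirst, hη_moment 2]
  ring

theorem stmt11
    (m n : ℕ) (hm : 0 < m) (hn : 0 < n)
    (A : Matrix (Fin m) (Fin n) ℝ) (L : Matrix (Fin n) (Fin n) ℝ) (hL : IsUnit L.det)
    (μ σ : ℝ) (hμ : 0 < μ) (hσ : 0 < σ)
    (b : Fin m → ℝ)
    (v : Fin n → Fin n → ℝ) (lam : Fin n → ℝ)
    (horth : ∀ i j, v i ⬝ᵥ v j = if i = j then (1 : ℝ) else 0)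
    (hlam_nonneg : ∀ j, 0 ≤ lam j) (hlam_anti : Antitone lam)
    (hHdecomp : (L⁻¹)ᵀ * Aᵀ * A * L⁻¹ = ∑ j, lam j • vecMulVec (v j) (v j))
    (k : ℕ) (hk : k ≤ n)
    (Γcond : Matrix (Fin n) (Fin n) ℝ)
    (hΓcond : Γcond = (μ • (Aᵀ * A) + σ • (Lᵀ * L))⁻¹)
    (Γhat : Matrix (Fin n) (Fin n) ℝ)
    (hΓhat : Γhat = L⁻¹ * (σ • (1 : Matrix (Fin n) (Fin n) ℝ) +
        μ • ∑ j ∈ Finset.univ.filter (fun j : Fin n => (j : ℕ) < k),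
          lam j • vecMulVec (v j) (v j))⁻¹ * (L⁻¹)ᵀ)
    (xhat : Fin n → ℝ) (hxhat : xhat = μ • (Γhat *ᵥ (Aᵀ *ᵥ b)))
    (w : (Fin n → ℝ) → ℝ)
    (hw : ∀ x, w x = Real.exp (-(1/2) * (x ⬝ᵥ ((Γcond⁻¹ - Γhat⁻¹) *ᵥ x))))
    (η : (Fin n → ℝ) → (Fin n → ℝ) → ℝ)
    (hη : ∀ z x, η z x = w z / w x)
    (gfun : (Fin n → ℝ) → ℝ)
    (hgfun : ∀ x, gfun x = (2 * Real.pi) ^ (-(n : ℝ) / 2) * Γhat.det ^ (-(1 : ℝ) / 2) *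
        Real.exp (-(1/2) * ((x - xhat) ⬝ᵥ (Γhat⁻¹ *ᵥ (x - xhat)))))
    (N : ℕ → ℝ)
    (hN : ∀ ℓ : ℕ, N ℓ = Real.exp ((μ ^ 2 / (2 * σ)) *
        ∑ j ∈ Finset.univ.filter (fun j : Fin n => k ≤ (j : ℕ)),
          (((ℓ : ℝ) * μ * lam j) / ((ℓ : ℝ) * μ * lam j + σ)) *
            (b ⬝ᵥ (A *ᵥ (L⁻¹ *ᵥ v j))) ^ 2) *
      ∏ j ∈ Finset.univ.filter (fun j : Fin n => k ≤ (j : ℕ)),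
        Real.sqrt (1 + (ℓ : ℝ) * μ * lam j / σ))
    :
    ∀ x : Fin n → ℝ,
      (∫ z : Fin n → ℝ, η z x ^ 2 * gfun z) - (∫ z : Fin n → ℝ, η z x * gfun z) ^ 2 =
        (1 / N 2 - 1 / N 1 ^ 2) / w x ^ 2 :=
  stmt11_general m n A L hL μ σ hμ hσ b v lam horth hlam_nonneg hHdecomp k Γcond hΓcond Γhat hΓhat
    xhat hxhat w hw η hη gfun hgfun N hN
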